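/- arXiv:2605.09057 — 2 statements merged into one kernel-verified Lean document; each statement's English description precedes it below -/
import Mathlib

section
/- Let H be a complex Hilbert space, let n ≥ 1, and let L : ℂⁿ → H be a linear map admitting a singular value decomposition in the following sense: there exist an orthonormal basis (v_j)_{j=1}^{n} of ℂⁿ (with the standard inner product), an orthonormal family (u_j)_{j=1}^{n} in H, and real numbers σ_1 ≥ σ_2 ≥ ⋯ ≥ σ_n ≥ 0 such that L v_j = σ_j u_j for all j. Fix ε > 0 and define the TSVD-regularized approximation operator Q_ε : H → H by Q_ε g = Σ_{j : σ_j > ε} ⟨u_j, g⟩ u_j. Then for every g ∈ H and every c ∈ ℂⁿ one has ‖g - Q_ε g‖_H ≤ ‖g - L c‖_H + ε · ‖c‖_2. -/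
/-!
Write `Q x = ∑_{σ j > ε} ⟪u j, x⟫ u j` and split `g - Q g = (I - Q)(g - L c) + (I - Q)(L c)`.
The first term has norm at most `‖g - L c‖` because `I - Q` is an orthogonal projection.
Expanding `c` in the basis `v`, `(I - Q)(L c) = ∑_{σ j ≤ ε} σ j ⟪v j, c⟫ u j`, whose norm is at
most `ε (∑ |⟪v j, c⟫|²)^{1/2} = ε ‖c‖` by Parseval.
-/

open Finset
open scoped InnerProductSpace

namespace Orthonormal

variable {𝕜 E ι : Type*} [RCLike 𝕜] [SeminormedAddCommGroup E] [InnerProductSpace 𝕜 E]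
  {u : ι → E}

theorem norm_sum_smul_sq (hu : Orthonormal 𝕜 u) (s : Finset ι) (l : ι → 𝕜) :
    ‖∑ j ∈ s, l j • u j‖ ^ 2 = ∑ j ∈ s, ‖l j‖ ^ 2 :=
  hu.orthogonalFamily.norm_sum l s

theorem inner_sub_sum_inner_smul_eq_zero (hu : Orthonormal 𝕜 u) {s : Finset ι} (x : E) {i : ι}
    (hi : i ∈ s) : ⟪u i, x - ∑ j ∈ s, ⟪u j, x⟫_𝕜 • u j⟫_𝕜 = 0 := by
  rw [inner_sub_right, hu.inner_right_sum _ hi, sub_self]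

theorem norm_sub_sum_inner_smul_le (hu : Orthonormal 𝕜 u) (s : Finset ι) (x : E) :
    ‖x - ∑ j ∈ s, ⟪u j, x⟫_𝕜 • u j‖ ≤ ‖x‖ := by
  set p := ∑ j ∈ s, ⟪u j, x⟫_𝕜 • u j
  have horth : ⟪p, x - p⟫_𝕜 = 0 := by
    simp only [p, sum_inner, inner_smul_left]
    exact sum_eq_zero fun j hj => by rw [hu.inner_sub_sum_inner_smul_eq_zero x hj, mul_zero]
  have hpythag := norm_add_sq_eq_norm_sq_add_norm_sq_of_inner_eq_zero p (x - p) horth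
  rw [add_sub_cancel] at hpythag
  nlinarith [norm_nonneg x, norm_nonneg (x - p)]

theorem sub_sum_inner_smul_add (s : Finset ι) (x y : E) :
    x + y - ∑ j ∈ s, ⟪u j, x + y⟫_𝕜 • u j
      = (x - ∑ j ∈ s, ⟪u j, x⟫_𝕜 • u j) + (y - ∑ j ∈ s, ⟪u j, y⟫_𝕜 • u j) := by
  simp only [inner_add_right, add_smul, sum_add_distrib]
  abel

theorem sum_smul_sub_sum_inner_smul [Fintype ι] [DecidableEq ι] (hu : Orthonormal 𝕜 u)
    (s : Finset ι) (a : ι → 𝕜) :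
    ∑ j, a j • u j - ∑ j ∈ s, ⟪u j, ∑ i, a i • u i⟫_𝕜 • u j = ∑ j ∈ sᶜ, a j • u j := by
  simp only [hu.inner_right_fintype]
  rw [← sum_add_sum_compl s, add_sub_cancel_left]

end Orthonormal

section SingularValueDecomposition

variable {𝕜 E H ι : Type*} [RCLike 𝕜] [NormedAddCommGroup E] [InnerProductSpace 𝕜 E]
  [SeminormedAddCommGroup H] [InnerProductSpace 𝕜 H] [Fintype ι]
  {L : E →ₗ[𝕜] H} {v : OrthonormalBasis ι 𝕜 E} {u : ι → H} {σ : ι → ℝ}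

theorem apply_eq_sum_singularValue_smul (hL : ∀ j, L (v j) = (σ j : 𝕜) • u j) (c : E) :
    L c = ∑ j, (σ j * ⟪v j, c⟫_𝕜) • u j := by
  conv_lhs => rw [← v.sum_repr' c]
  simp only [map_sum, map_smul, hL, smul_smul, mul_comm]

theorem norm_sum_singularValue_smul_le (hu : Orthonormal 𝕜 u) (hσ0 : ∀ j, 0 ≤ σ j)
    {ε : ℝ} (hε : 0 ≤ ε) {t : Finset ι} (hσt : ∀ j ∈ t, σ j ≤ ε) (c : E) :
    ‖∑ j ∈ t, (σ j * ⟪v j, c⟫_𝕜) • u j‖ ≤ ε * ‖c‖ := by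
  have hsq : ‖∑ j ∈ t, (σ j * ⟪v j, c⟫_𝕜) • u j‖ ^ 2 ≤ (ε * ‖c‖) ^ 2 :=
    calc ‖∑ j ∈ t, (σ j * ⟪v j, c⟫_𝕜) • u j‖ ^ 2
        = ∑ j ∈ t, σ j ^ 2 * ‖⟪v j, c⟫_𝕜‖ ^ 2 := by
          simp only [hu.norm_sum_smul_sq, norm_mul, RCLike.norm_ofReal, abs_of_nonneg (hσ0 _),
            mul_pow]
      _ ≤ ∑ j ∈ t, ε ^ 2 * ‖⟪v j, c⟫_𝕜‖ ^ 2 := by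
          gcongr with j hj
          exacts [hσ0 j, hσt j hj]
      _ ≤ ∑ j, ε ^ 2 * ‖⟪v j, c⟫_𝕜‖ ^ 2 :=
          sum_le_sum_of_subset_of_nonneg (subset_univ t) fun _ _ _ => by positivity
      _ = (ε * ‖c‖) ^ 2 := by rw [← mul_sum, v.sum_sq_norm_inner_right, mul_pow]
  exact (pow_le_pow_iff_left₀ (norm_nonneg _) (by positivity) two_ne_zero).mp hsq

theorem norm_apply_sub_truncated_le [DecidableEq ι] (hu : Orthonormal 𝕜 u)
    (hσ0 : ∀ j, 0 ≤ σ j) (hL : ∀ j, L (v j) = (σ j : 𝕜) • u j) {ε : ℝ} (hε : 0 ≤ ε) (c : E) :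
    ‖L c - ∑ j ∈ univ.filter (ε < σ ·), ⟪u j, L c⟫_𝕜 • u j‖ ≤ ε * ‖c‖ := by
  rw [apply_eq_sum_singularValue_smul hL, hu.sum_smul_sub_sum_inner_smul]
  refine norm_sum_singularValue_smul_le hu hσ0 hε (fun j hj => ?_) c
  simpa using hj

end SingularValueDecomposition

open scoped ComplexInnerProductSpace in
theorem tsvd_quasi_optimal_general {H : Type*} [NormedAddCommGroup H] [InnerProductSpace ℂ H]
    (n : ℕ)
    (L : EuclideanSpace ℂ (Fin n) →ₗ[ℂ] H)
    (v : OrthonormalBasis (Fin n) ℂ (EuclideanSpace ℂ (Fin n)))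
    (u : Fin n → H) (hu : Orthonormal ℂ u)
    (σ : Fin n → ℝ) (hσ0 : ∀ j, 0 ≤ σ j)
    (hL : ∀ j, L (v j) = (σ j : ℂ) • u j)
    (ε : ℝ) (hε : 0 < ε)
    (g : H) (c : EuclideanSpace ℂ (Fin n)) :
    ‖g - ∑ j ∈ Finset.univ.filter (fun j => ε < σ j), (inner ℂ (u j) g : ℂ) • u j‖
      ≤ ‖g - L c‖ + ε * ‖c‖ := by
  set S := Finset.univ.filter (fun j => ε < σ j)
  calc ‖g - ∑ j ∈ S, ⟪u j, g⟫ • u j‖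
      = ‖(g - L c - ∑ j ∈ S, ⟪u j, g - L c⟫ • u j) + (L c - ∑ j ∈ S, ⟪u j, L c⟫ • u j)‖ := by
        rw [← Orthonormal.sub_sum_inner_smul_add, sub_add_cancel]
    _ ≤ ‖g - L c - ∑ j ∈ S, ⟪u j, g - L c⟫ • u j‖ + ‖L c - ∑ j ∈ S, ⟪u j, L c⟫ • u j‖ :=
        norm_add_le _ _
    _ ≤ ‖g - L c‖ + ε * ‖c‖ :=
        add_le_add (hu.norm_sub_sum_inner_smul_le S _)
          (norm_apply_sub_truncated_le hu hσ0 hL hε.le c)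

open scoped ComplexInnerProductSpace in
/-- TSVD quasi-optimality: if `L : ℂⁿ → H` has a singular value decomposition
`L (v j) = σ j • u j` with `(v j)` an orthonormal basis of `ℂⁿ`, `(u j)` orthonormal in `H`,
and `σ_1 ≥ ⋯ ≥ σ_n ≥ 0`, and `Q_ε g = ∑_{σ j > ε} ⟪u j, g⟫ • u j` is the TSVD-regularized
approximation, then `‖g - Q_ε g‖ ≤ ‖g - L c‖ + ε * ‖c‖₂` for every `g ∈ H`, `c ∈ ℂⁿ`. -/
theorem tsvd_quasi_optimal {H : Type*} [NormedAddCommGroup H] [InnerProductSpace ℂ H]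
    [CompleteSpace H] (n : ℕ) (hn : 1 ≤ n)
    (L : EuclideanSpace ℂ (Fin n) →ₗ[ℂ] H)
    (v : OrthonormalBasis (Fin n) ℂ (EuclideanSpace ℂ (Fin n)))
    (u : Fin n → H) (hu : Orthonormal ℂ u)
    (σ : Fin n → ℝ) (hσ0 : ∀ j, 0 ≤ σ j)
    (hσmono : ∀ i j : Fin n, i ≤ j → σ j ≤ σ i)
    (hL : ∀ j, L (v j) = (σ j : ℂ) • u j)
    (ε : ℝ) (hε : 0 < ε)
    (g : H) (c : EuclideanSpace ℂ (Fin n)) :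
    ‖g - ∑ j ∈ Finset.univ.filter (fun j => ε < σ j), (inner ℂ (u j) g : ℂ) • u j‖
      ≤ ‖g - L c‖ + ε * ‖c‖ :=
  tsvd_quasi_optimal_general n L v u hu σ hσ0 hL ε hε g c
end

section
/- Let N ≥ 1, set h = 2/N, and let t_j = -1 + j·h for j = 0,…,N be the equispaced nodes on [-1,1]. Let a = a_0 < a_1 < ⋯ < a_K = b be a partition of [a,b] with midpoints c_k = (a_{k-1}+a_k)/2, half-lengths s_k = (a_k - a_{k-1})/2, and maximal subinterval length h_I = max_k (a_k - a_{k-1}). Suppose f is (N+1)-times continuously differentiable on [a,b] with ‖f^{(N+1)}‖_{L^∞(a,b)} ≤ C_f, and set g_k(t) = f(c_k + s_k t) on [-1,1]. Let H = L²(-1,1) and let L : ℂ^{N+1} → H be a linear map with singular value decomposition L v_j = σ_j u_j, where (v_j) is an orthonormal basis of ℂ^{N+1}, (u_j) is an orthonormal family in H, and σ_j ≥ 0; fix ε > 0 and let Q_ε be the associated TSVD-regularized approximation operator Q_ε g = Σ_{j : σ_j > ε} ⟨u_j, g⟩ u_j. Suppose that for each k there is a vector c_k^{int} ∈ ℂ^{N+1}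 with L c_k^{int} equal (in L²(-1,1)) to the degree-N Lagrange interpolation polynomial of g_k at the nodes t_0,…,t_N. Define the global approximation (P f)(x) = (Q_ε g_k)((x - c_k)/s_k) for x ∈ [a_{k-1}, a_k). Then ‖f - P f‖²_{L²(a,b)} ≤ Σ_{k=1}^{K} s_k · ( √2 · (h_I^{N+1} / N^{N+1}) · C_f + ε · ‖c_k^{int}‖_2 )². -/
/-!
On each cell `[a_{k-1}, a_k]` the rescaled function `g_k` has `(N+1)`-st derivative bounded by
`s_k^{N+1} C_f`. The classical Lagrange remainder `g - p = g^{(N+1)}(ξ)/(N+1)! · ∏ (x - t_j)`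
(obtained from `N + 1` applications of Rolle's theorem), together with the equispaced bound
`|∏ (x - t_j)| ≤ (2/N)^{N+1} (N+1)!`, gives `|g_k - p_k| ≤ (h_I/N)^{N+1} C_f` pointwise, hence
`√2 (h_I/N)^{N+1} C_f` in `L²(-1,1)`. Since `Q_ε` is an orthogonal projection, it does not increase
the error `g_k - L c_k^{int}`, while the part of `L c_k^{int}` it discards lives on singular
values `σ_j ≤ ε` and so has norm at most `ε ‖c_k^{int}‖`. Finally the affine change of variables
turns `‖g_k - Q_ε g_k‖²_{L²(-1,1)}` into `s_k⁻¹` times the squared error on the `k`-th cell.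
-/

open MeasureTheory

section Interpolation

open Set Finset Polynomial
open scoped Nat

theorem Polynomial.iteratedDerivWithin_eval {𝕜 : Type*} [NontriviallyNormedField 𝕜] {s : Set 𝕜}
    (hs : UniqueDiffOn 𝕜 s) {x : 𝕜} (hx : x ∈ s) (p : 𝕜[X]) (n : ℕ) :
    iteratedDerivWithin n (fun y => p.eval y) s x = (derivative^[n] p).eval x := by
  have hp : ContDiff 𝕜 n fun y => p.eval y := by
    simpa using p.contDiff_aeval (R := 𝕜) (𝕜 := 𝕜) n
  rw [iteratedDerivWithin_eq_iteratedDeriv hs hp.contDiffAt hx, iteratedDeriv_eq_iterate]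
  clear hp
  induction n generalizing p with
  | zero => rfl
  | succ n ih =>
    have hd : deriv (fun y => p.eval y) = fun y => p.derivative.eval y := by
      ext y; exact p.deriv
    rw [Function.iterate_succ_apply, Function.iterate_succ_apply, hd, ih]

theorem Polynomial.Monic.iterate_derivative_natDegree {R : Type*} [CommSemiring R] {p : R[X]}
    (hp : p.Monic) : derivative^[p.natDegree] p = C (p.natDegree ! : R) := by
  rw [eq_C_of_natDegree_le_zero ((natDegree_iterate_derivative p _).trans (by omega)),
    coeff_iterate_derivative, zero_add, hp.coeff_natDegree, Nat.descFactorial_self, nsmul_one]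

theorem exists_iteratedDerivWithin_eq_zero_of_strictMono {a b : ℝ} (hab : a < b) {m : ℕ}
    {F : ℝ → ℝ} (hF : ContDiffOn ℝ m F (Icc a b)) {x : Fin (m + 1) → ℝ} (hx : StrictMono x)
    (hxI : ∀ i, x i ∈ Icc a b) (hF0 : ∀ i, F (x i) = 0) :
    ∃ c ∈ Icc a b, iteratedDerivWithin m F (Icc a b) c = 0 := by
  induction m generalizing F with
  | zero => exact ⟨x 0, hxI 0, by simpa using hF0 0⟩
  | succ m ih =>
    have hrolle : ∀ i : Fin (m + 1), ∃ y ∈ Ioo (x i.castSucc) (x i.succ),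
        derivWithin F (Icc a b) y = 0 := by
      intro i
      have hsub : Icc (x i.castSucc) (x i.succ) ⊆ Icc a b :=
        Icc_subset_Icc (hxI _).1 (hxI _).2
      obtain ⟨y, hy, hy0⟩ := exists_deriv_eq_zero (hx (Fin.castSucc_lt_succ (i := i)))
        (hF.continuousOn.mono hsub) (by rw [hF0, hF0])
      refine ⟨y, hy, ?_⟩
      rwa [derivWithin_of_mem_nhds
        (Icc_mem_nhds ((hxI _).1.trans_lt hy.1) (hy.2.trans_le (hxI _).2))]
    choose y hy hy0 using hrolle
    have hymono : StrictMono y := Fin.strictMono_iff_lt_succ.mpr fun i =>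
      (hy _).2.trans (by rw [Fin.succ_castSucc]; exact (hy _).1)
    obtain ⟨c, hc, hc0⟩ := ih (hF.derivWithin (uniqueDiffOn_Icc hab) (by norm_cast)) hymono
      (fun i => ⟨(hxI _).1.trans (hy i).1.le, (hy i).2.le.trans (hxI _).2⟩) hy0
    exact ⟨c, hc, by rwa [iteratedDerivWithin_succ']⟩

theorem exists_iteratedDerivWithin_eq_zero_of_card_eq {a b : ℝ} (hab : a < b) {m : ℕ}
    {F : ℝ → ℝ} (hF : ContDiffOn ℝ m F (Icc a b)) {Z : Finset ℝ} (hZ : #Z = m + 1)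
    (hZI : ∀ z ∈ Z, z ∈ Icc a b) (hF0 : ∀ z ∈ Z, F z = 0) :
    ∃ c ∈ Icc a b, iteratedDerivWithin m F (Icc a b) c = 0 :=
  exists_iteratedDerivWithin_eq_zero_of_strictMono hab hF (Z.orderEmbOfFin hZ).strictMono
    (fun i => hZI _ (Z.orderEmbOfFin_mem hZ i)) (fun i => hF0 _ (Z.orderEmbOfFin_mem hZ i))

theorem Lagrange.iterate_derivative_interpolate_add_C_mul_nodal {F ι : Type*} [Field F]
    [DecidableEq ι] {s : Finset ι} {t : ι → F} (ht : Set.InjOn t s) (r : ι → F) (α : F) :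
    derivative^[#s] (interpolate s t r + C α * nodal s t) = C (α * (#s)!) := by
  have hnodal : derivative^[#s] (nodal s t) = C ((#s)! : F) := by
    simpa [natDegree_nodal] using (nodal_monic (s := s) (v := t)).iterate_derivative_natDegree
  rw [iterate_map_add, iterate_derivative_C_mul, hnodal, C_mul,
    iterate_derivative_eq_zero_of_degree_lt (degree_interpolate_lt _ ht), zero_add]

theorem Lagrange.exists_sub_eval_interpolate_eq {ι : Type*} [DecidableEq ι] {s : Finset ι}
    {t : ι → ℝ} (ht : Set.InjOn t s) {a b : ℝ} (hab : a < b) (htI : ∀ i ∈ s, t i ∈ Icc a b)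
    {g : ℝ → ℝ} (hg : ContDiffOn ℝ #s g (Icc a b)) {x : ℝ} (hx : x ∈ Icc a b) :
    ∃ ξ ∈ Icc a b, g x - (interpolate s t (fun i => g (t i))).eval x =
      iteratedDerivWithin #s g (Icc a b) ξ / (#s)! * ∏ i ∈ s, (x - t i) := by
  set p := interpolate s t (fun i => g (t i))
  by_cases hnode : x ∈ s.image t
  · obtain ⟨i, hi, rfl⟩ := Finset.mem_image.mp hnode
    refine ⟨t i, hx, ?_⟩
    rw [eval_interpolate_at_node _ ht hi, sub_self, prod_eq_zero hi (sub_self _), mul_zero]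
  set W := ∏ i ∈ s, (x - t i)
  have hW : W ≠ 0 := prod_ne_zero_iff.mpr fun i hi =>
    sub_ne_zero.mpr fun h => hnode (Finset.mem_image.mpr ⟨i, hi, h.symm⟩)
  set E := g x - p.eval x
  -- `r` agrees with `g` at the nodes and at `x`, so `g - r` has `#s + 1` zeros.
  set r := p + C (E / W) * nodal s t
  set F : ℝ → ℝ := fun y => g y - r.eval y
  have hF0 : ∀ z ∈ insert x (s.image t), F z = 0 := by
    simp only [Finset.mem_insert, Finset.mem_image]
    rintro z (rfl | ⟨i, hi, rfl⟩)
    · simp [F, r, eval_nodal, E, W, field]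
    · simp only [F, r, p, eval_add, eval_mul, eval_C, eval_nodal_at_node hi, mul_zero, add_zero,
        eval_interpolate_at_node _ ht hi, sub_self]
  have hZI : ∀ z ∈ insert x (s.image t), z ∈ Icc a b := by
    simp only [Finset.mem_insert, Finset.mem_image]
    rintro z (rfl | ⟨i, hi, rfl⟩)
    exacts [hx, htI i hi]
  have hr : ContDiff ℝ #s fun y => r.eval y := by
    simpa using r.contDiff_aeval (R := ℝ) (𝕜 := ℝ) #s
  obtain ⟨ξ, hξ, hξ0⟩ := exists_iteratedDerivWithin_eq_zero_of_card_eq hab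
    (hg.sub hr.contDiffOn) (by rw [card_insert_of_notMem hnode, card_image_of_injOn ht]) hZI hF0
  have hFξ : iteratedDerivWithin #s F (Icc a b) ξ
      = iteratedDerivWithin #s g (Icc a b) ξ - E / W * (#s)! := by
    change iteratedDerivWithin #s (g - fun y => r.eval y) (Icc a b) ξ = _
    rw [iteratedDerivWithin_sub hξ (uniqueDiffOn_Icc hab) (hg ξ hξ) hr.contDiffWithinAt,
      r.iteratedDerivWithin_eval (uniqueDiffOn_Icc hab) hξ,
      iterate_derivative_interpolate_add_C_mul_nodal ht, eval_C]
  refine ⟨ξ, hξ, ?_⟩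
  rw [hξ0] at hFξ
  field_simp at hFξ ⊢
  linarith

/-- Stated on `[-1, N + 1]` rather than `[0, N]` so that the induction closes: removing the
factor `j = N` (when `s ≤ N`) or `j = 0` (otherwise, after `s ↦ s - 1`) leaves the case `N - 1`. -/
theorem prod_abs_sub_natCast_le_factorial (N : ℕ) {s : ℝ} (hs : s ∈ Icc (-1 : ℝ) (N + 1)) :
    ∏ j ∈ range (N + 1), |s - j| ≤ (N + 1)! := by
  induction N generalizing s with
  | zero => simpa using abs_le.mpr ⟨hs.1, by simpa using hs.2⟩
  | succ N ih =>
    obtain ⟨hs₁, hs₂⟩ := hs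
    push_cast at hs₂ ⊢
    rw [Nat.factorial_succ, Nat.cast_mul, mul_comm]
    by_cases hsN : s ≤ N + 1
    · rw [prod_range_succ]
      gcongr
      · exact ih ⟨hs₁, hsN⟩
      · push_cast; exact abs_le.mpr ⟨by linarith, by linarith⟩
    · rw [prod_range_succ']
      have hshift : ∀ j : ℕ, |s - ↑(j + 1)| = |(s - 1) - j| := fun j => by push_cast; ring_nf
      simp_rw [hshift]
      gcongr
      · exact ih ⟨by linarith, by linarith⟩
      · push_cast; exact abs_le.mpr ⟨by linarith, by linarith⟩

theorem abs_prod_sub_equispaced_le {N : ℕ} (hN : 0 < N) {t : ℕ → ℝ}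
    (ht : ∀ j, t j = -1 + j * (2 / N)) {x : ℝ} (hx : x ∈ Icc (-1 : ℝ) 1) :
    |∏ j ∈ range (N + 1), (x - t j)| ≤ (2 / N) ^ (N + 1) * (N + 1)! := by
  have hN' : (0 : ℝ) < N := by exact_mod_cast hN
  have hnode : ∀ j : ℕ, x - t j = 2 / N * ((x + 1) * N / 2 - j) := fun j => by
    rw [ht]; field_simp; ring
  have hscaled : (x + 1) * N / 2 ∈ Icc (-1 : ℝ) (N + 1) :=
    ⟨by nlinarith [hx.1], by nlinarith [hx.2]⟩
  simp_rw [abs_prod, hnode, abs_mul, prod_mul_distrib, prod_const, card_range,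
    abs_of_pos (div_pos two_pos hN')]
  gcongr
  exact prod_abs_sub_natCast_le_factorial N hscaled

theorem abs_sub_eval_interpolate_equispaced_le {N : ℕ} (hN : 0 < N) {t : ℕ → ℝ}
    (ht : ∀ j, t j = -1 + j * (2 / N)) {g : ℝ → ℝ} (hg : ContDiffOn ℝ (N + 1) g (Icc (-1) 1))
    {M : ℝ} (hM : ∀ y ∈ Icc (-1 : ℝ) 1, |iteratedDerivWithin (N + 1) g (Icc (-1) 1) y| ≤ M)
    {x : ℝ} (hx : x ∈ Icc (-1 : ℝ) 1) :
    |g x - (Lagrange.interpolate (range (N + 1)) t (fun j => g (t j))).eval x|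
      ≤ (2 / N) ^ (N + 1) * M := by
  have hN' : (0 : ℝ) < N := by exact_mod_cast hN
  have htinj : Set.InjOn t (Finset.range (N + 1) : Set ℕ) := fun i _ j _ hij => by
    rw [ht, ht] at hij
    exact_mod_cast (mul_left_injective₀ (div_pos two_pos hN').ne') (add_left_cancel hij)
  have htI : ∀ j ∈ range (N + 1), t j ∈ Icc (-1 : ℝ) 1 := fun j hj => by
    have hjN : (j : ℝ) ≤ N := by exact_mod_cast Nat.lt_succ_iff.mp (mem_range.mp hj)
    rw [ht]
    constructor
    · have : (0 : ℝ) ≤ j * (2 / N) := by positivity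
      linarith
    · calc (-1 : ℝ) + j * (2 / N) ≤ -1 + N * (2 / N) := by gcongr
        _ = 1 := by field_simp; ring
  obtain ⟨ξ, hξ, herr⟩ := Lagrange.exists_sub_eval_interpolate_eq htinj (by norm_num) htI
    (by rwa [card_range]) hx
  rw [herr, card_range, abs_mul, abs_div, abs_of_pos (by positivity : (0 : ℝ) < (N + 1)!)]
  calc |iteratedDerivWithin (N + 1) g (Icc (-1) 1) ξ| / (N + 1)! * |∏ j ∈ range (N + 1), (x - t j)|
      ≤ M / (N + 1)! * ((2 / N) ^ (N + 1) * (N + 1)!) := by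
        gcongr
        · exact div_nonneg ((abs_nonneg _).trans (hM ξ hξ)) (by positivity)
        · exact hM ξ hξ
        · exact abs_prod_sub_equispaced_le hN ht hx
    _ = (2 / N) ^ (N + 1) * M := by field_simp

theorem iteratedDerivWithin_comp_const_add_mul {𝕜 F : Type*} [NontriviallyNormedField 𝕜]
    [NormedAddCommGroup F] [NormedSpace 𝕜 F] {n : ℕ} {f : 𝕜 → F} {s t : Set 𝕜}
    (hs : UniqueDiffOn 𝕜 s) (ht : UniqueDiffOn 𝕜 t) (hf : ContDiffOn 𝕜 n f t) {c d : 𝕜}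
    (hst : MapsTo (fun x => c + d * x) s t) {x : 𝕜} (hx : x ∈ s) :
    iteratedDerivWithin n (fun x => f (c + d * x)) s x
      = d ^ n • iteratedDerivWithin n f t (c + d * x) := by
  induction n generalizing x with
  | zero => simp
  | succ n ih =>
    have hEq : EqOn (iteratedDerivWithin n (fun x => f (c + d * x)) s)
        (fun x => d ^ n • iteratedDerivWithin n f t (c + d * x)) s :=
      fun y hy => ih hf.of_succ hy
    have hdiff : DifferentiableWithinAt 𝕜 (iteratedDerivWithin n f t) t (c + d * x) :=
      hf.differentiableOn_iteratedDerivWithin (by exact_mod_cast n.lt_succ_self) ht _ (hst hx)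
    have haff : HasDerivWithinAt (fun x => c + d * x) d s x := by
      simpa using ((hasDerivWithinAt_id x s).const_mul d).const_add c
    have hcomp : HasDerivWithinAt (fun x => d ^ n • iteratedDerivWithin n f t (c + d * x))
        (d ^ n • d • derivWithin (iteratedDerivWithin n f t) t (c + d * x)) s x :=
      (hdiff.hasDerivWithinAt.scomp x haff hst).const_smul (d ^ n)
    rw [iteratedDerivWithin_succ, derivWithin_congr hEq (hEq hx), iteratedDerivWithin_succ,
      hcomp.derivWithin (hs.uniqueDiffWithinAt hx), smul_smul, pow_succ]

end Interpolation

section TSVD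

open Finset

variable {𝕜 E ι : Type*} [RCLike 𝕜] [NormedAddCommGroup E] [InnerProductSpace 𝕜 E]
  {u : ι → E}

theorem Orthonormal.norm_sum_smul_sq_s9 (hu : Orthonormal 𝕜 u) (s : Finset ι) (l : ι → 𝕜) :
    ‖∑ i ∈ s, l i • u i‖ ^ 2 = ∑ i ∈ s, ‖l i‖ ^ 2 := by
  simpa using hu.orthogonalFamily.norm_sum l s

theorem Orthonormal.norm_sub_sum_inner_smul_le_s9 (hu : Orthonormal 𝕜 u) (s : Finset ι) (x : E) :
    ‖x - ∑ i ∈ s, inner 𝕜 (u i) x • u i‖ ≤ ‖x‖ := by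
  set y := ∑ i ∈ s, inner 𝕜 (u i) x • u i
  have hcomp : ∀ i ∈ s, inner 𝕜 (u i) (x - y) = 0 := fun i hi => by
    rw [inner_sub_right, hu.inner_right_sum _ hi, sub_self]
  have horth : inner 𝕜 y (x - y) = 0 := by
    change inner 𝕜 (∑ i ∈ s, inner 𝕜 (u i) x • u i) (x - y) = 0
    rw [sum_inner]
    exact sum_eq_zero fun i hi => by rw [inner_smul_left, hcomp i hi, mul_zero]
  have hpyth := norm_add_sq_eq_norm_sq_add_norm_sq_of_inner_eq_zero y (x - y) horth
  rw [add_sub_cancel] at hpyth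
  nlinarith [norm_nonneg (x - y), norm_nonneg x, mul_self_nonneg ‖y‖]

variable [Fintype ι]

variable (𝕜) in
noncomputable def tsvdApprox (u : ι → E) (σ : ι → ℝ) (ε : ℝ) (g : E) : E :=
  ∑ j ∈ univ.filter (fun j => ε < σ j), inner 𝕜 (u j) g • u j

theorem tsvdApprox_add (σ : ι → ℝ) (ε : ℝ) (x y : E) :
    tsvdApprox 𝕜 u σ ε (x + y) = tsvdApprox 𝕜 u σ ε x + tsvdApprox 𝕜 u σ ε y := by
  simp only [tsvdApprox, inner_add_right, add_smul, sum_add_distrib]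

variable {V : Type*} [NormedAddCommGroup V] [InnerProductSpace 𝕜 V] (L : V →ₗ[𝕜] E)
  (v : OrthonormalBasis ι 𝕜 V) {σ : ι → ℝ}

theorem norm_sub_tsvdApprox_apply_le (hu : Orthonormal 𝕜 u) (hσ : ∀ j, 0 ≤ σ j)
    (hL : ∀ j, L (v j) = (σ j : 𝕜) • u j) {ε : ℝ} (hε : 0 ≤ ε) (c : V) :
    ‖L c - tsvdApprox 𝕜 u σ ε (L c)‖ ≤ ε * ‖c‖ := by
  set d : ι → 𝕜 := fun j => v.repr c j * σ j
  have hLc : L c = ∑ j, d j • u j := by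
    conv_lhs => rw [← v.sum_repr c]
    simp [d, map_sum, hL, smul_smul]
  have htail : L c - tsvdApprox 𝕜 u σ ε (L c)
      = ∑ j ∈ univ.filter (fun j => ¬ ε < σ j), d j • u j := by
    simp only [tsvdApprox, hLc, hu.inner_right_fintype]
    rw [← sum_filter_add_sum_filter_not univ (fun j => ε < σ j)]
    abel
  refine (pow_le_pow_iff_left₀ (norm_nonneg _) (by positivity) two_ne_zero).mp ?_
  calc ‖L c - tsvdApprox 𝕜 u σ ε (L c)‖ ^ 2
      = ∑ j ∈ univ.filter (fun j => ¬ ε < σ j), ‖d j‖ ^ 2 := by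
        rw [htail, hu.norm_sum_smul_sq_s9]
    _ ≤ ∑ j ∈ univ.filter (fun j => ¬ ε < σ j), ε ^ 2 * ‖v.repr c j‖ ^ 2 := by
        refine sum_le_sum fun j hj => ?_
        rw [norm_mul, RCLike.norm_ofReal, abs_of_nonneg (hσ j), mul_pow, mul_comm]
        gcongr
        · exact hσ j
        · exact not_lt.mp (mem_filter.mp hj).2
    _ ≤ ∑ j, ε ^ 2 * ‖v.repr c j‖ ^ 2 :=
        sum_le_sum_of_subset_of_nonneg (filter_subset _ _) fun _ _ _ => by positivity
    _ = (ε * ‖c‖) ^ 2 := by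
        rw [← mul_sum, mul_pow, ← v.repr.norm_map c, EuclideanSpace.norm_sq_eq]

theorem norm_sub_tsvdApprox_le (hu : Orthonormal 𝕜 u) (hσ : ∀ j, 0 ≤ σ j)
    (hL : ∀ j, L (v j) = (σ j : 𝕜) • u j) {ε : ℝ} (hε : 0 ≤ ε) (g : E) (c : V) :
    ‖g - tsvdApprox 𝕜 u σ ε g‖ ≤ ‖g - L c‖ + ε * ‖c‖ := by
  have hsplit : g - tsvdApprox 𝕜 u σ ε g = ((g - L c) - tsvdApprox 𝕜 u σ ε (g - L c))
      + (L c - tsvdApprox 𝕜 u σ ε (L c)) := by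
    conv_lhs => rw [← sub_add_cancel g (L c), tsvdApprox_add]
    abel
  rw [hsplit]
  exact (norm_add_le _ _).trans (add_le_add (hu.norm_sub_sum_inner_smul_le_s9 _ _)
    (norm_sub_tsvdApprox_apply_le L v hu hσ hL hε c))

end TSVD

section L2

open Set

theorem MeasureTheory.Lp.norm_le_sqrt_mul_of_ae_bound {α E : Type*} [MeasurableSpace α]
    {μ : Measure α} [IsFiniteMeasure μ] [NormedAddCommGroup E] {f : Lp E 2 μ} {C : ℝ}
    (hC : 0 ≤ C) (hf : ∀ᵐ x ∂μ, ‖f x‖ ≤ C) : ‖f‖ ≤ √(μ.real univ) * C := by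
  convert Lp.norm_le_of_ae_bound hC hf using 2
  simp [Real.sqrt_eq_rpow, measureReal_def, measureUnivNNReal, ENNReal.coe_toNNReal_eq_toReal]

theorem MeasureTheory.Lp.integral_norm_sq_eq {α 𝕜 E : Type*} [MeasurableSpace α] {μ : Measure α}
    [RCLike 𝕜] [NormedAddCommGroup E] [InnerProductSpace 𝕜 E] (f : Lp E 2 μ) :
    ∫ x, ‖f x‖ ^ 2 ∂μ = ‖f‖ ^ 2 := by
  rw [@norm_sq_eq_re_inner 𝕜, L2.inner_def, ← integral_re (L2.integrable_inner f f)]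
  simp_rw [← @norm_sq_eq_re_inner 𝕜]

theorem IntervalIntegrable.of_comp_const_add_mul {F : ℝ → ℝ} {c s a b : ℝ} (hs : s ≠ 0)
    (hF : IntervalIntegrable (fun t => F (c + s * t)) volume a b) :
    IntervalIntegrable F volume (c + s * a) (c + s * b) := by
  have h := (hF.comp_mul_left (c := s⁻¹)).comp_add_right (-c)
  simp only [div_inv_eq_mul, sub_neg_eq_add] at h
  convert h using 1
  · ext x; congr 1; field_simp; ring
  · ring
  · ring

theorem integral_norm_sub_sq_eq_of_rescale {𝕜 E : Type*} [RCLike 𝕜] [NormedAddCommGroup E]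
    [InnerProductSpace 𝕜 E] {f P : ℝ → E} {c s : ℝ} (hs : 0 < s)
    {g q : Lp E 2 (volume.restrict (Ioc (-1 : ℝ) 1))}
    (hg : ∀ᵐ t ∂(volume.restrict (Ioc (-1 : ℝ) 1)), g t = f (c + s * t))
    (hP : ∀ x ∈ Ico (c - s) (c + s), P x = q ((x - c) / s)) :
    IntervalIntegrable (fun x => ‖f x - P x‖ ^ 2) volume (c - s) (c + s) ∧
      ∫ x in c - s..c + s, ‖f x - P x‖ ^ 2 = s * ‖g - q‖ ^ 2 := by
  set F : ℝ → ℝ := fun x => ‖f x - P x‖ ^ 2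
  have hIoo : ∀ᵐ t ∂(volume.restrict (Ioc (-1 : ℝ) 1)), t ∈ Ioo (-1 : ℝ) 1 := by
    rw [← Measure.restrict_congr_set (Ioo_ae_eq_Ioc (μ := (volume : Measure ℝ)))]
    exact ae_restrict_mem measurableSet_Ioo
  have hae : (fun t => F (c + s * t)) =ᵐ[volume.restrict (Ioc (-1 : ℝ) 1)]
      fun t => ‖(g - q) t‖ ^ 2 := by
    filter_upwards [hg, Lp.coeFn_sub g q, hIoo] with t hgt hsub ht
    have hx : c + s * t ∈ Ico (c - s) (c + s) := ⟨by nlinarith [ht.1], by nlinarith [ht.2]⟩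
    change ‖f (c + s * t) - P (c + s * t)‖ ^ 2 = _
    rw [hsub, Pi.sub_apply, hgt, hP _ hx, add_sub_cancel_left, mul_div_cancel_left₀ _ hs.ne']
  have hint : IntervalIntegrable (fun t => F (c + s * t)) volume (-1) 1 := by
    refine (intervalIntegrable_iff_integrableOn_Ioc_of_le (by norm_num)).mpr
      (Integrable.congr ?_ hae.symm)
    exact (memLp_two_iff_integrable_sq_norm (Lp.aestronglyMeasurable _)).mp (Lp.memLp _)
  have hcs : c - s = c + s * -1 := by ring
  refine ⟨by simpa [hcs] using hint.of_comp_const_add_mul hs.ne', ?_⟩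
  have h := intervalIntegral.integral_comp_add_mul F hs.ne' c (a := -1) (b := 1)
  rw [mul_one, ← hcs, intervalIntegral.integral_of_le (by norm_num), integral_congr_ae hae,
    Lp.integral_norm_sq_eq (𝕜 := 𝕜), smul_eq_mul] at h
  rw [h, mul_inv_cancel_left₀ hs.ne']

theorem intervalIntegral.integral_eq_sum_Icc {E : Type*} [NormedAddCommGroup E] [NormedSpace ℝ E]
    {F : ℝ → E} {A : ℕ → ℝ} {K : ℕ}
    (hF : ∀ k ∈ Finset.Icc 1 K, IntervalIntegrable F volume (A (k - 1)) (A k)) :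
    ∫ x in A 0..A K, F x = ∑ k ∈ Finset.Icc 1 K, ∫ x in A (k - 1)..A k, F x := by
  rw [← sum_integral_adjacent_intervals fun k hk => by
      simpa using hF (k + 1) (Finset.mem_Icc.mpr ⟨by omega, by omega⟩),
    Finset.range_eq_Ico, ← Finset.Ico_add_one_right_eq_Icc,
    ← Finset.sum_Ico_add' (fun k => ∫ x in A (k - 1)..A k, F x) 0 K 1]
  simp

end L2

theorem abs_sub_eval_interpolate_rescaled_le {N : ℕ} (hN : 0 < N) {t : ℕ → ℝ}
    (ht : ∀ j, t j = -1 + j * (2 / N)) {a b : ℝ} {f : ℝ → ℝ} {Cf : ℝ}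
    (hf : ContDiffOn ℝ (N + 1) f (Set.Icc a b))
    (hbound : ∀ x ∈ Set.Icc a b, |iteratedDerivWithin (N + 1) f (Set.Icc a b) x| ≤ Cf)
    {c s h : ℝ} (hs : 0 < s) (hsh : 2 * s ≤ h) (hsub : Set.Icc (c - s) (c + s) ⊆ Set.Icc a b)
    {x : ℝ} (hx : x ∈ Set.Icc (-1 : ℝ) 1) :
    |f (c + s * x) - (Lagrange.interpolate (Finset.range (N + 1)) t
      (fun j => f (c + s * t j))).eval x| ≤ h ^ (N + 1) / (N : ℝ) ^ (N + 1) * Cf := by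
  have hab : a < b :=
    (hsub (Set.left_mem_Icc.mpr (by linarith))).1.trans_lt
      (lt_of_lt_of_le (by linarith) (hsub (Set.right_mem_Icc.mpr (by linarith))).2)
  have hmaps : Set.MapsTo (fun x => c + s * x) (Set.Icc (-1) 1) (Set.Icc a b) := fun x hx =>
    hsub ⟨by nlinarith [hx.1], by nlinarith [hx.2]⟩
  have hCf : 0 ≤ Cf := (abs_nonneg _).trans (hbound a ⟨le_rfl, hab.le⟩)
  have hderiv : ∀ y ∈ Set.Icc (-1 : ℝ) 1,
      |iteratedDerivWithin (N + 1) (fun x => f (c + s * x)) (Set.Icc (-1) 1) y|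
        ≤ s ^ (N + 1) * Cf := fun y hy => by
    rw [iteratedDerivWithin_comp_const_add_mul (uniqueDiffOn_Icc (by norm_num))
      (uniqueDiffOn_Icc hab) hf hmaps hy, smul_eq_mul, abs_mul, abs_pow, abs_of_pos hs]
    gcongr
    exact hbound _ (hmaps hy)
  calc _ ≤ (2 / N) ^ (N + 1) * (s ^ (N + 1) * Cf) :=
        abs_sub_eval_interpolate_equispaced_le hN ht (hf.comp (by fun_prop) hmaps) hderiv hx
    _ = (2 * s / N) ^ (N + 1) * Cf := by ring
    _ ≤ h ^ (N + 1) / (N : ℝ) ^ (N + 1) * Cf := by rw [← div_pow]; gcongr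

theorem norm_sub_interpolant_rescaled_le {𝕜 : Type*} [RCLike 𝕜] {N : ℕ} (hN : 0 < N)
    {t : ℕ → ℝ} (ht : ∀ j, t j = -1 + j * (2 / N)) {a b : ℝ} {f : ℝ → ℝ} {Cf : ℝ}
    (hf : ContDiffOn ℝ (N + 1) f (Set.Icc a b))
    (hbound : ∀ x ∈ Set.Icc a b, |iteratedDerivWithin (N + 1) f (Set.Icc a b) x| ≤ Cf)
    {c s h : ℝ} (hs : 0 < s) (hsh : 2 * s ≤ h) (hsub : Set.Icc (c - s) (c + s) ⊆ Set.Icc a b)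
    {g p : Lp 𝕜 2 (volume.restrict (Set.Ioc (-1 : ℝ) 1))}
    (hg : ∀ᵐ x ∂(volume.restrict (Set.Ioc (-1 : ℝ) 1)), g x = (f (c + s * x) : 𝕜))
    (hp : ∀ᵐ x ∂(volume.restrict (Set.Ioc (-1 : ℝ) 1)), p x =
      (((Lagrange.interpolate (Finset.range (N + 1)) t
        (fun j => f (c + s * t j))).eval x : ℝ) : 𝕜)) :
    ‖g - p‖ ≤ √2 * (h ^ (N + 1) / (N : ℝ) ^ (N + 1)) * Cf := by
  have hpointwise := fun x (hx : x ∈ Set.Icc (-1 : ℝ) 1) =>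
    abs_sub_eval_interpolate_rescaled_le hN ht hf hbound hs hsh hsub hx
  have hvol : (volume.restrict (Set.Ioc (-1 : ℝ) 1)).real Set.univ = 2 := by norm_num
  refine (Lp.norm_le_sqrt_mul_of_ae_bound
    ((abs_nonneg _).trans (hpointwise 0 (by norm_num))) ?_).trans_eq (by rw [hvol, mul_assoc])
  filter_upwards [hg, hp, Lp.coeFn_sub g p, ae_restrict_mem measurableSet_Ioc]
    with x hgx hpx hgp hx
  rw [hgp, Pi.sub_apply, hgx, hpx, ← RCLike.ofReal_sub, RCLike.norm_ofReal]
  exact hpointwise x (Set.Ioc_subset_Icc_self hx)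

theorem lt_and_Icc_subset_of_lt_succ {A : ℕ → ℝ} {K k : ℕ}
    (hmono : ∀ k, k < K → A k < A (k + 1)) (hk : k ∈ Finset.Icc 1 K) :
    A (k - 1) < A k ∧ Set.Icc (A (k - 1)) (A k) ⊆ Set.Icc (A 0) (A K) := by
  have hA : StrictMonoOn A (Set.Iic K) := strictMonoOn_Iic_of_lt_succ hmono
  obtain ⟨hk₁, hkK⟩ := Finset.mem_Icc.mp hk
  have hmem : ∀ {i}, i ≤ K → i ∈ Set.Iic K := id
  refine ⟨hA (hmem (by omega)) (hmem hkK) (by omega), Set.Icc_subset_Icc ?_ ?_⟩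
  · exact hA.monotoneOn (hmem (Nat.zero_le K)) (hmem (by omega)) (Nat.zero_le _)
  · exact hA.monotoneOn (hmem hkK) (hmem le_rfl) hkK

/-- Global quasi-optimal bound for the TSVD local Legendre frame approximation
(Corollary 2.4): with a partition `a = A 0 < ⋯ < A K = b` of maximal length `h_I`,
`f ∈ C^{N+1}[a,b]` with `‖f^{(N+1)}‖_∞ ≤ C_f`, local rescaled functions
`g_k(t) = f(c_k + s_k t)` (regarded in `L²(-1,1)`), a linear map
`L : ℂ^{N+1} → L²(-1,1)` with SVD `L (v j) = σ j • u j`, TSVD threshold `ε > 0`, and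
vectors `cint k` with `L (cint k)` equal in `L²(-1,1)` to the degree-`N` equispaced Lagrange
interpolant of `g_k`, the piecewise approximation `(P f)(x) = (Q_ε g_k)((x - c_k)/s_k)`
satisfies
`‖f - P f‖²_{L²(a,b)} ≤ ∑_k s_k (√2 * h_I^(N+1)/N^(N+1) * C_f + ε ‖cint k‖₂)²`. -/
theorem llf_global_quasi_optimal (N : ℕ) (hN : 1 ≤ N)
    (t : ℕ → ℝ) (ht : ∀ j, t j = -1 + j * (2 / N))
    (a b : ℝ) (K : ℕ) (hK : 1 ≤ K)
    (A : ℕ → ℝ) (hA0 : A 0 = a) (hAK : A K = b)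
    (hmono : ∀ k, k < K → A k < A (k + 1))
    (cc ss : ℕ → ℝ)
    (hcc : ∀ k, cc k = (A (k - 1) + A k) / 2)
    (hss : ∀ k, ss k = (A k - A (k - 1)) / 2)
    (hI : ℝ)
    (hhI : hI = (Finset.Icc 1 K).sup' (Finset.nonempty_Icc.mpr hK)
      (fun k => A k - A (k - 1)))
    (f : ℝ → ℝ) (Cf : ℝ)
    (hf : ContDiffOn ℝ (N + 1) f (Set.Icc a b))
    (hbound : ∀ x ∈ Set.Icc a b, |iteratedDerivWithin (N + 1) f (Set.Icc a b) x| ≤ Cf)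
    (μ : Measure ℝ) (hμ : μ = volume.restrict (Set.Ioc (-1 : ℝ) 1))
    (L : EuclideanSpace ℂ (Fin (N + 1)) →ₗ[ℂ] Lp ℂ 2 μ)
    (v : OrthonormalBasis (Fin (N + 1)) ℂ (EuclideanSpace ℂ (Fin (N + 1))))
    (u : Fin (N + 1) → Lp ℂ 2 μ) (hu : Orthonormal ℂ u)
    (σ : Fin (N + 1) → ℝ) (hσ0 : ∀ j, 0 ≤ σ j)
    (hL : ∀ j, L (v j) = (σ j : ℂ) • u j)
    (ε : ℝ) (hε : 0 < ε)
    -- the local functions `g_k` regarded as elements of `L²(-1,1)`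
    (gL : ℕ → Lp ℂ 2 μ)
    (hgL : ∀ k ∈ Finset.Icc 1 K, ∀ᵐ x ∂μ, gL k x = (f (cc k + ss k * x) : ℂ))
    -- the TSVD-regularized approximations `Q_ε g_k`
    (Q : ℕ → Lp ℂ 2 μ)
    (hQ : ∀ k, Q k = ∑ j ∈ Finset.univ.filter (fun j => ε < σ j),
      (inner ℂ (u j) (gL k) : ℂ) • u j)
    -- coefficient vectors representing the local Lagrange interpolants
    (cint : ℕ → EuclideanSpace ℂ (Fin (N + 1)))
    (hcint : ∀ k ∈ Finset.Icc 1 K, ∀ᵐ x ∂μ, (L (cint k)) x =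
      (((Lagrange.interpolate (Finset.range (N + 1)) t
          (fun j => f (cc k + ss k * t j))).eval x : ℝ) : ℂ))
    -- the global piecewise approximation
    (Pf : ℝ → ℂ)
    (hPf : ∀ k ∈ Finset.Icc 1 K, ∀ x ∈ Set.Ico (A (k - 1)) (A k),
      Pf x = (Q k) ((x - cc k) / ss k)) :
    ∫ x in Set.Ioc a b, ‖(f x : ℂ) - Pf x‖ ^ 2
      ≤ ∑ k ∈ Finset.Icc 1 K, ss k *
          (Real.sqrt 2 * (hI ^ (N + 1) / (N : ℝ) ^ (N + 1)) * Cf + ε * ‖cint k‖) ^ 2 := by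
  subst hμ
  have hab : a ≤ b := hA0 ▸ hAK ▸
    (strictMonoOn_Iic_of_lt_succ hmono).monotoneOn (by simp) (by simp) (Nat.zero_le K)
  have hcell : ∀ k ∈ Finset.Icc 1 K, 0 < ss k ∧ cc k - ss k = A (k - 1) ∧
      cc k + ss k = A k ∧ Set.Icc (A (k - 1)) (A k) ⊆ Set.Icc a b := fun k hk => by
    obtain ⟨hlt, hsub⟩ := lt_and_Icc_subset_of_lt_succ hmono hk
    exact ⟨by rw [hss]; linarith, by rw [hcc, hss]; ring, by rw [hcc, hss]; ring, hA0 ▸ hAK ▸ hsub⟩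
  have hpiece : ∀ k ∈ Finset.Icc 1 K,
      IntervalIntegrable (fun x => ‖(f x : ℂ) - Pf x‖ ^ 2) volume (A (k - 1)) (A k) ∧
        ∫ x in A (k - 1)..A k, ‖(f x : ℂ) - Pf x‖ ^ 2 = ss k * ‖gL k - Q k‖ ^ 2 := fun k hk => by
    obtain ⟨hs, hlo, hhi, -⟩ := hcell k hk
    have hPfk := hPf k hk
    rw [← hlo, ← hhi] at hPfk ⊢
    exact integral_norm_sub_sq_eq_of_rescale (𝕜 := ℂ) hs (hgL k hk) hPfk
  have herr : ∀ k ∈ Finset.Icc 1 K, ‖gL k - Q k‖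
      ≤ Real.sqrt 2 * (hI ^ (N + 1) / (N : ℝ) ^ (N + 1)) * Cf + ε * ‖cint k‖ := fun k hk => by
    obtain ⟨hs, hlo, hhi, hsub⟩ := hcell k hk
    rw [hQ k]
    refine (norm_sub_tsvdApprox_le L v hu hσ0 hL hε.le _ _).trans (add_le_add_left ?_ _)
    refine norm_sub_interpolant_rescaled_le hN ht hf hbound hs ?_ (by rwa [hlo, hhi])
      (hgL k hk) (hcint k hk)
    rw [hhI, hss, mul_div_cancel₀ _ two_ne_zero]
    exact Finset.le_sup' (fun k => A k - A (k - 1)) hk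
  rw [← intervalIntegral.integral_of_le hab, ← hA0, ← hAK,
    intervalIntegral.integral_eq_sum_Icc fun k hk => (hpiece k hk).1]
  exact Finset.sum_le_sum fun k hk => by
    rw [(hpiece k hk).2]
    gcongr
    exacts [(hcell k hk).1.le, herr k hk]
end
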